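/- arXiv:1706.01337 — 2 statements merged into one kernel-verified Lean document; each statement's English description precedes it below -/
import Mathlib

section
/- Off-by-ℓ Zames–Falb ρ-hard IQC under multiplicative noise. Let n ∈ ℕ and let g : ℝⁿ → ℝ be an admissible potential with gradient ∇g. Let ρ ∈ (0,1], ℓ ≥ 1 a natural number, δ ∈ [0,1), and let γ satisfy 0 < γ ≤ (1−δ)/(1+δ). Let (δ_k) be any real sequence with |δ_k| ≤ δ for all k, let y : ℕ → ℝⁿ be any sequence, and set u_k = (1 + δ_k)·∇g(y_k), adopting the convention y_j = 0 for j < 0. Then for every T ∈ ℕ: ∑_{k=0}^{T} ρ^{−2k} ⟨u_k, y_k − γ·ρ^{2ℓ}·y_{k−ℓ}⟩ ≥ 0. -/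
/-!
Write `G = ∇g(y_k)`, `w = y_{k-ℓ}` and `c = γ ρ^{2ℓ} ∈ [0, 1]`. Since
`y_k - c w = (1 - c) (y_k - 0) + c (y_k - w)`, the first-order convexity inequality at `0` and
at `w`, together with `g 0 = 0`, gives `⟪G, y_k - c w⟫ ≥ g(y_k) - c g(w)`. As `g ≥ 0`, the noise
factor `1 + δ_k ∈ [1 - δ, 1 + δ]` then yields
`ρ^{-2k} ⟪u_k, y_k - c w⟫ ≥ (1 - δ) φ_k - (1 + δ) γ φ_{k-ℓ}` with `φ_k = ρ^{-2k} g(y_k) ≥ 0`.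
Summing over `k ≤ T`, the delayed sum of `φ` is at most the undelayed one, and
`(1 + δ) γ ≤ 1 - δ`.
-/

open Finset
open scoped RealInnerProductSpace

theorem ConvexOn.add_le_of_hasFDerivAt {E : Type*} [NormedAddCommGroup E] [NormedSpace ℝ E]
    {g : E → ℝ} (hg : ConvexOn ℝ Set.univ g) {g' : E →L[ℝ] ℝ} {x : E} (hx : HasFDerivAt g g' x)
    (z : E) : g x + g' (z - x) ≤ g z := by
  have hderiv : HasDerivAt (g ∘ AffineMap.lineMap (k := ℝ) x z) (g' (z - x)) 0 :=
    ((AffineMap.lineMap_apply_zero (k := ℝ) x z).symm ▸ hx).comp_hasDerivAt 0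
      AffineMap.hasDerivAt_lineMap
  have hslope := (hg.comp_affineMap (AffineMap.lineMap x z)).le_slope_of_hasDerivAt
    (Set.mem_univ (0 : ℝ)) (Set.mem_univ 1) one_pos hderiv
  simp only [slope, sub_zero, inv_one, one_smul, Function.comp_apply,
    AffineMap.lineMap_apply_zero, AffineMap.lineMap_apply_one, vsub_eq_sub] at hslope
  linarith

theorem ConvexOn.add_inner_gradient_le {E : Type*} [NormedAddCommGroup E]
    [InnerProductSpace ℝ E] [CompleteSpace E] {g : E → ℝ} (hg : ConvexOn ℝ Set.univ g)
    {x : E} (hx : DifferentiableAt ℝ g x) (z : E) : g x + ⟪gradient g x, z - x⟫ ≤ g z := by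
  simpa using hg.add_le_of_hasFDerivAt hx.hasGradientAt.hasFDerivAt z

theorem ConvexOn.sub_mul_le_inner_gradient {E : Type*} [NormedAddCommGroup E]
    [InnerProductSpace ℝ E] [CompleteSpace E] {g : E → ℝ} (hg : ConvexOn ℝ Set.univ g)
    (hg0 : g 0 = 0) {y : E} (hy : DifferentiableAt ℝ g y) (w : E) {c : ℝ} (hc0 : 0 ≤ c)
    (hc1 : c ≤ 1) : g y - c * g w ≤ ⟪gradient g y, y - c • w⟫ := by
  have h0 := hg.add_inner_gradient_le hy 0
  have hw := hg.add_inner_gradient_le hy w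
  simp only [hg0, zero_sub, inner_neg_right, inner_sub_right] at h0 hw
  rw [inner_sub_right, real_inner_smul_right]
  nlinarith

theorem sub_le_one_add_mul {a b x d δ : ℝ} (hd : |d| ≤ δ) (hδ : δ ≤ 1) (ha : 0 ≤ a)
    (hb : 0 ≤ b) (h : a - b ≤ x) : (1 - δ) * a - (1 + δ) * b ≤ (1 + d) * x := by
  obtain ⟨hd₁, hd₂⟩ := abs_le.mp hd
  nlinarith [mul_le_mul_of_nonneg_left h (by linarith : 0 ≤ 1 + d)]

def delay {M : Type*} [Zero M] (ℓ : ℕ) (f : ℕ → M) (k : ℕ) : M :=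
  if ℓ ≤ k then f (k - ℓ) else 0

section delay

variable {M : Type*}

theorem apply_delay [Zero M] {N : Type*} [Zero N] {g : M → N} (hg : g 0 = 0) (ℓ : ℕ)
    (f : ℕ → M) (k : ℕ) : g (delay ℓ f k) = delay ℓ (g ∘ f) k := by
  unfold delay; split_ifs <;> simp [hg]

theorem delay_of_lt [Zero M] {ℓ k : ℕ} (hk : k < ℓ) (f : ℕ → M) : delay ℓ f k = 0 :=
  if_neg (Nat.not_le.mpr hk)

theorem delay_add_left [Zero M] (ℓ : ℕ) (f : ℕ → M) (k : ℕ) : delay ℓ f (ℓ + k) = f k := by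
  simp [delay]

theorem sum_range_delay [AddCommMonoid M] (ℓ : ℕ) (f : ℕ → M) (N : ℕ) :
    ∑ k ∈ range N, delay ℓ f k = ∑ j ∈ range (N - ℓ), f j := by
  rcases le_total N ℓ with hN | hN
  · rw [Nat.sub_eq_zero_of_le hN, range_zero, sum_empty]
    exact sum_eq_zero fun k hk => delay_of_lt ((mem_range.mp hk).trans_le hN) f
  · obtain ⟨m, rfl⟩ := Nat.exists_eq_add_of_le hN
    rw [sum_range_add, Nat.add_sub_cancel_left,
      sum_eq_zero fun k hk => delay_of_lt (mem_range.mp hk) f, zero_add]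
    simp only [delay_add_left]

theorem sum_range_delay_le [AddCommMonoid M] [PartialOrder M] [IsOrderedAddMonoid M]
    {f : ℕ → M} (hf : ∀ k, 0 ≤ f k) (ℓ N : ℕ) :
    ∑ k ∈ range N, delay ℓ f k ≤ ∑ k ∈ range N, f k := by
  rw [sum_range_delay]
  exact sum_le_sum_of_subset_of_nonneg (range_subset_range.mpr (N.sub_le ℓ))
    fun k _ _ => hf k

end delay

theorem sum_range_sub_mul_delay_nonneg {f : ℕ → ℝ} (hf : ∀ k, 0 ≤ f k) {α β : ℝ}
    (hβ0 : 0 ≤ β) (hβα : β ≤ α) (ℓ N : ℕ) :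
    0 ≤ ∑ k ∈ range N, (α * f k - β * delay ℓ f k) := by
  rw [sum_sub_distrib, ← mul_sum, ← mul_sum, sub_nonneg]
  calc β * ∑ k ∈ range N, delay ℓ f k ≤ β * ∑ k ∈ range N, f k :=
        mul_le_mul_of_nonneg_left (sum_range_delay_le hf ℓ N) hβ0
    _ ≤ α * ∑ k ∈ range N, f k :=
        mul_le_mul_of_nonneg_right hβα (sum_nonneg fun k _ => hf k)

theorem zpow_neg_two_mul_mul_delay {ρ : ℝ} (hρ : ρ ≠ 0) (ℓ : ℕ) (a : ℕ → ℝ) (k : ℕ) :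
    ρ ^ (-(2 * (k : ℤ))) * (ρ ^ (2 * ℓ) * delay ℓ a k) =
      delay ℓ (fun j => ρ ^ (-(2 * (j : ℤ))) * a j) k := by
  unfold delay
  split_ifs with h
  · rw [← mul_assoc, ← zpow_natCast, ← zpow_add₀ hρ]
    push_cast [h]
    ring_nf
  · simp

theorem stmt_11_general {n : ℕ} (g : EuclideanSpace ℝ (Fin n) → ℝ)
    (hconv : ConvexOn ℝ Set.univ g) (hdiff : Differentiable ℝ g)
    (hnonneg : ∀ x, 0 ≤ g x) (hg0 : g 0 = 0)
    (ρ : ℝ) (hρ : ρ ∈ Set.Ioc (0 : ℝ) 1)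
    (ℓ : ℕ)
    (δ : ℝ) (hδ : δ ∈ Set.Ico (0 : ℝ) 1)
    (γ : ℝ) (hγ0 : 0 < γ) (hγ : γ ≤ (1 - δ) / (1 + δ))
    (δseq : ℕ → ℝ) (hδseq : ∀ k, |δseq k| ≤ δ)
    (y : ℕ → EuclideanSpace ℝ (Fin n)) (u : ℕ → EuclideanSpace ℝ (Fin n))
    (hu : ∀ k, u k = (1 + δseq k) • gradient g (y k)) :
    ∀ T : ℕ, 0 ≤ ∑ k ∈ Finset.range (T + 1),
      ρ ^ (-(2 * (k : ℤ))) *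
        ⟪u k, y k - (γ * ρ ^ (2 * ℓ)) • (if ℓ ≤ k then y (k - ℓ) else 0)⟫ := by
  intro T
  obtain ⟨hρ0, hρ1⟩ := hρ
  obtain ⟨hδ0, hδ1⟩ := hδ
  have hβα : (1 + δ) * γ ≤ 1 - δ := by rwa [le_div_iff₀ (by linarith), mul_comm] at hγ
  set c := γ * ρ ^ (2 * ℓ)
  have hc0 : 0 ≤ c := by positivity
  have hc1 : c ≤ 1 := by nlinarith [pow_le_one₀ hρ0.le hρ1 (n := 2 * ℓ)]
  set φ : ℕ → ℝ := fun k => ρ ^ (-(2 * (k : ℤ))) * g (y k)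
  have hφ : ∀ k, 0 ≤ φ k := fun k => mul_nonneg (zpow_pos hρ0 _).le (hnonneg _)
  refine (sum_range_sub_mul_delay_nonneg hφ (by positivity) hβα ℓ (T + 1)).trans
    (sum_le_sum fun k _ => ?_)
  have hshift : ρ ^ (-(2 * (k : ℤ))) * (ρ ^ (2 * ℓ) * delay ℓ (g ∘ y) k) = delay ℓ φ k :=
    zpow_neg_two_mul_mul_delay hρ0.ne' ℓ (g ∘ y) k
  have hterm := sub_le_one_add_mul (hδseq k) hδ1.le (hnonneg (y k))
    (mul_nonneg hc0 (hnonneg (delay ℓ y k)))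
    (hconv.sub_mul_le_inner_gradient hg0 (hdiff (y k)) (delay ℓ y k) hc0 hc1)
  calc (1 - δ) * φ k - (1 + δ) * γ * delay ℓ φ k
      = ρ ^ (-(2 * (k : ℤ))) * ((1 - δ) * g (y k) - (1 + δ) * (c * g (delay ℓ y k))) := by
        rw [apply_delay hg0]
        linear_combination (1 + δ) * γ * hshift
    _ ≤ ρ ^ (-(2 * (k : ℤ))) * ⟪u k, y k - c • delay ℓ y k⟫ := by
        rw [hu k, real_inner_smul_left]
        exact mul_le_mul_of_nonneg_left hterm (zpow_pos hρ0 _).le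

/-- Appendix B.2: off-by-ℓ Zames–Falb ρ-hard IQC under multiplicative noise, for
`u_k = (1 + δ_k) ∇g(y_k)` with `|δ_k| ≤ δ` and `0 < γ ≤ (1-δ)/(1+δ)`. -/
theorem stmt_11 {n : ℕ} (g : EuclideanSpace ℝ (Fin n) → ℝ)
    (hconv : ConvexOn ℝ Set.univ g) (hdiff : Differentiable ℝ g)
    (hnonneg : ∀ x, 0 ≤ g x) (hg0 : g 0 = 0)
    (ρ : ℝ) (hρ : ρ ∈ Set.Ioc (0 : ℝ) 1)
    (ℓ : ℕ) (hℓ : 1 ≤ ℓ)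
    (δ : ℝ) (hδ : δ ∈ Set.Ico (0 : ℝ) 1)
    (γ : ℝ) (hγ0 : 0 < γ) (hγ : γ ≤ (1 - δ) / (1 + δ))
    (δseq : ℕ → ℝ) (hδseq : ∀ k, |δseq k| ≤ δ)
    (y : ℕ → EuclideanSpace ℝ (Fin n)) (u : ℕ → EuclideanSpace ℝ (Fin n))
    (hu : ∀ k, u k = (1 + δseq k) • gradient g (y k)) :
    ∀ T : ℕ, 0 ≤ ∑ k ∈ Finset.range (T + 1),
      ρ ^ (-(2 * (k : ℤ))) *
        ⟪u k, y k - (γ * ρ ^ (2 * ℓ)) • (if ℓ ≤ k then y (k - ℓ) else 0)⟫ :=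
  stmt_11_general g hconv hdiff hnonneg hg0 ρ hρ ℓ δ hδ γ hγ0 hγ δseq hδseq y u hu
end

section
/- Stiction/noisy-composition Zames–Falb ρ-hard IQC with a general nonnegative filter (Corollary 19, time domain). Let n ∈ ℕ and let g : ℝⁿ → ℝ be an admissible potential with gradient ∇g. Let ρ ∈ (0,1] and δ ∈ [0,1), and let h : ℕ → ℝ satisfy h_k ≥ 0 for all k and ∑_{k=0}^{∞} ρ^{−2k} h_k ≤ (1−δ)/(1+δ) (the series being summable). Let (δ_k) be any real sequence with |δ_k| ≤ δ for all k, let y : ℕ → ℝⁿ be any sequence, and set u_k = (1 + δ_k)·∇g(y_k). Then for every T ∈ ℕ: ∑_{k=0}^{T} ρ^{−2k} ⟨u_k, y_k − ∑_{j=0}^{k} h_j·y_{k−j}⟩ ≥ 0. -/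
open scoped RealInnerProductSpace

/-!
Write `G k = g (y k)`. Convexity and `g 0 = 0` give, for weights `h j ≥ 0` of total mass at
most `1`, the pointwise bound `⟪∇g(y k), y k - ∑ h j • y (k - j)⟫ ≥ G k - ∑ h j * G (k - j)`,
and the multiplicative perturbation turns it into `(1 - δ) G k - (1 + δ) (h ⋆ G) k`. Since the
weights `ρ⁻²ᵏ` are geometric, the weighted convolution is bounded by the product of the weighted
sums, `∑ ρ⁻²ᵏ (h ⋆ G) k ≤ (∑ ρ⁻²ʲ h j) (∑ ρ⁻²ⁱ G i)`, and the constraint on `h` together with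
`G ≥ 0` makes the weighted sum of the lower bounds nonnegative.
-/

section FirstOrder

variable {E : Type*} [NormedAddCommGroup E] [NormedSpace ℝ E] {f : E → ℝ} {f' : E →L[ℝ] ℝ}

theorem ConvexOn.sub_le_of_hasFDerivAt (hf : ConvexOn ℝ Set.univ f) {x : E}
    (hx : HasFDerivAt f f' x) (y : E) : f x - f y ≤ f' (x - y) := by
  have hline : ConvexOn ℝ Set.univ (f ∘ AffineMap.lineMap (k := ℝ) x y) := by
    simpa using hf.comp_affineMap (AffineMap.lineMap x y)
  have hderiv : HasDerivAt (f ∘ AffineMap.lineMap (k := ℝ) x y) (f' (y - x)) 0 :=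
    (by simpa using hx : HasFDerivAt f f' (AffineMap.lineMap x y (0 : ℝ))).comp_hasDerivAt 0
      AffineMap.hasDerivAt_lineMap
  have hslope := hline.le_slope_of_hasDerivAt (Set.mem_univ 0) (Set.mem_univ 1) zero_lt_one hderiv
  rw [slope_def_field] at hslope
  simp only [Function.comp_apply, AffineMap.lineMap_apply_zero, AffineMap.lineMap_apply_one,
    sub_zero, div_one] at hslope
  rw [← neg_sub y x, map_neg]
  linarith

end FirstOrder

section Gradient

variable {E : Type*} [NormedAddCommGroup E] [InnerProductSpace ℝ E] [CompleteSpace E] {g : E → ℝ}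

theorem ConvexOn.sub_le_inner_gradient (hg : ConvexOn ℝ Set.univ g) {x : E}
    (hx : DifferentiableAt ℝ g x) (y : E) : g x - g y ≤ ⟪gradient g x, x - y⟫ := by
  rw [inner_gradient_left]
  exact hg.sub_le_of_hasFDerivAt hx.hasFDerivAt y

theorem ConvexOn.sub_sum_le_inner_gradient_sub_sum (hg : ConvexOn ℝ Set.univ g) (hg0 : g 0 = 0)
    {x : E} (hx : DifferentiableAt ℝ g x) {ι : Type*} (s : Finset ι) {w : ι → ℝ}
    (hw : ∀ i ∈ s, 0 ≤ w i) (hw1 : ∑ i ∈ s, w i ≤ 1) (z : ι → E) :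
    g x - ∑ i ∈ s, w i * g (z i) ≤ ⟪gradient g x, x - ∑ i ∈ s, w i • z i⟫ := by
  have hsplit : ⟪gradient g x, x - ∑ i ∈ s, w i • z i⟫ =
      (1 - ∑ i ∈ s, w i) * ⟪gradient g x, x⟫ + ∑ i ∈ s, w i * ⟪gradient g x, x - z i⟫ := by
    simp only [inner_sub_right, inner_sum, real_inner_smul_right, mul_sub, Finset.sum_sub_distrib,
      ← Finset.sum_mul]
    ring
  have hzero : g x ≤ ⟪gradient g x, x⟫ := by
    simpa [hg0] using hg.sub_le_inner_gradient hx 0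
  have hpoints : ∑ i ∈ s, w i * (g x - g (z i)) ≤ ∑ i ∈ s, w i * ⟪gradient g x, x - z i⟫ :=
    Finset.sum_le_sum fun i hi =>
      mul_le_mul_of_nonneg_left (hg.sub_le_inner_gradient hx (z i)) (hw i hi)
  have hmass : (1 - ∑ i ∈ s, w i) * g x ≤ (1 - ∑ i ∈ s, w i) * ⟪gradient g x, x⟫ :=
    mul_le_mul_of_nonneg_left hzero (sub_nonneg.mpr hw1)
  simp only [mul_sub, Finset.sum_sub_distrib, ← Finset.sum_mul] at hpoints
  linarith

end Gradient

theorem Finset.sum_range_conv_le_mul_sum_range {a b : ℕ → ℝ} (ha : ∀ k, 0 ≤ a k)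
    (hb : ∀ k, 0 ≤ b k) (n : ℕ) :
    ∑ m ∈ Finset.range n, ∑ k ∈ Finset.range (m + 1), a k * b (m - k) ≤
      (∑ k ∈ Finset.range n, a k) * ∑ k ∈ Finset.range n, b k := by
  rw [Finset.sum_range_diag_flip n fun k i => a k * b i, Finset.sum_mul]
  refine Finset.sum_le_sum fun m _ => ?_
  rw [← Finset.mul_sum]
  exact mul_le_mul_of_nonneg_left
    (Finset.sum_le_sum_of_subset_of_nonneg (Finset.range_subset_range.mpr (Nat.sub_le n m))
      fun k _ _ => hb k) (ha m)

theorem Finset.sum_range_pow_mul_conv_le {r : ℝ} (hr : 0 ≤ r) {a b : ℕ → ℝ}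
    (ha : ∀ k, 0 ≤ a k) (hb : ∀ k, 0 ≤ b k) (n : ℕ) :
    ∑ m ∈ Finset.range n, r ^ m * ∑ k ∈ Finset.range (m + 1), a k * b (m - k) ≤
      (∑ k ∈ Finset.range n, r ^ k * a k) * ∑ k ∈ Finset.range n, r ^ k * b k := by
  have hweights : ∀ m, r ^ m * ∑ k ∈ Finset.range (m + 1), a k * b (m - k) =
      ∑ k ∈ Finset.range (m + 1), r ^ k * a k * (r ^ (m - k) * b (m - k)) := fun m => by
    rw [Finset.mul_sum]
    refine Finset.sum_congr rfl fun k hk => ?_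
    rw [← Nat.add_sub_of_le (Nat.lt_succ_iff.mp (Finset.mem_range.mp hk))]
    simp only [pow_add, Nat.add_sub_cancel_left]
    ring
  simp only [hweights]
  exact Finset.sum_range_conv_le_mul_sum_range (fun k => mul_nonneg (pow_nonneg hr k) (ha k))
    (fun k => mul_nonneg (pow_nonneg hr k) (hb k)) n

theorem sum_pow_mul_sub_conv_nonneg {r δ : ℝ} (hr : 0 ≤ r) (hδ : -1 < δ) {h G : ℕ → ℝ}
    (hh : ∀ k, 0 ≤ h k) (hG : ∀ k, 0 ≤ G k) (n : ℕ)
    (hfilter : ∑ k ∈ Finset.range n, r ^ k * h k ≤ (1 - δ) / (1 + δ)) :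
    0 ≤ ∑ m ∈ Finset.range n,
      r ^ m * ((1 - δ) * G m - (1 + δ) * ∑ k ∈ Finset.range (m + 1), h k * G (m - k)) := by
  have hS : 0 ≤ ∑ k ∈ Finset.range n, r ^ k * G k :=
    Finset.sum_nonneg fun k _ => mul_nonneg (pow_nonneg hr k) (hG k)
  have hconv := Finset.sum_range_pow_mul_conv_le hr hh hG n
  have hbound := hconv.trans (mul_le_mul_of_nonneg_right hfilter hS)
  rw [div_mul_eq_mul_div, le_div_iff₀ (by linarith)] at hbound
  simp only [mul_sub, Finset.sum_sub_distrib, mul_left_comm _ (1 - δ), mul_left_comm _ (1 + δ),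
    ← Finset.mul_sum]
  linarith

theorem one_sub_mul_sub_one_add_mul_le_of_abs_le {a b t e δ : ℝ} (ha : 0 ≤ a) (hb : 0 ≤ b)
    (he : |e| ≤ δ) (hδ : δ ≤ 1) (h : a - b ≤ t) : (1 - δ) * a - (1 + δ) * b ≤ (1 + e) * t := by
  obtain ⟨hle, hge⟩ := abs_le.mp he
  nlinarith [mul_le_mul_of_nonneg_left h (show 0 ≤ 1 + e by linarith)]

theorem zpow_neg_two_mul_natCast (ρ : ℝ) (k : ℕ) : ρ ^ (-(2 * (k : ℤ))) = (ρ ^ 2)⁻¹ ^ k := by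
  rw [zpow_neg, inv_pow, ← pow_mul]
  norm_cast

/-- Corollary 19 (time domain): the Zames–Falb ρ-hard IQC for the composition of a
monotone gradient nonlinearity with a multiplicative perturbation of relative error
`δ`, with nonnegative filter satisfying `∑ ρ⁻²ᵏ hₖ ≤ (1-δ)/(1+δ)`. -/
theorem stmt_12 {n : ℕ} (g : EuclideanSpace ℝ (Fin n) → ℝ)
    (hconv : ConvexOn ℝ Set.univ g) (hdiff : Differentiable ℝ g)
    (hnonneg : ∀ x, 0 ≤ g x) (hg0 : g 0 = 0)
    (ρ : ℝ) (hρ : ρ ∈ Set.Ioc (0 : ℝ) 1)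
    (δ : ℝ) (hδ : δ ∈ Set.Ico (0 : ℝ) 1)
    (h : ℕ → ℝ) (hpos : ∀ k, 0 ≤ h k)
    (hsum : Summable (fun k : ℕ => ρ ^ (-(2 * (k : ℤ))) * h k))
    (hsum1 : ∑' k : ℕ, ρ ^ (-(2 * (k : ℤ))) * h k ≤ (1 - δ) / (1 + δ))
    (δseq : ℕ → ℝ) (hδseq : ∀ k, |δseq k| ≤ δ)
    (y : ℕ → EuclideanSpace ℝ (Fin n)) (u : ℕ → EuclideanSpace ℝ (Fin n))
    (hu : ∀ k, u k = (1 + δseq k) • gradient g (y k)) :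
    ∀ T : ℕ, 0 ≤ ∑ k ∈ Finset.range (T + 1),
      ρ ^ (-(2 * (k : ℤ))) *
        ⟪u k, y k - ∑ j ∈ Finset.range (k + 1), h j • y (k - j)⟫ := by
  obtain ⟨hρ0, hρ1⟩ := hρ
  obtain ⟨hδ0, hδ1⟩ := hδ
  intro T
  simp only [zpow_neg_two_mul_natCast] at hsum hsum1 ⊢
  have hr : 1 ≤ (ρ ^ 2)⁻¹ := (one_le_inv₀ (by positivity)).mpr (pow_le_one₀ hρ0.le hρ1)
  have hfilter (s : Finset ℕ) : ∑ k ∈ s, (ρ ^ 2)⁻¹ ^ k * h k ≤ (1 - δ) / (1 + δ) :=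
    (hsum.sum_le_tsum s fun k _ => mul_nonneg (by positivity) (hpos k)).trans hsum1
  have hmass (m : ℕ) : ∑ k ∈ Finset.range (m + 1), h k ≤ 1 := calc
    _ ≤ ∑ k ∈ Finset.range (m + 1), (ρ ^ 2)⁻¹ ^ k * h k :=
      Finset.sum_le_sum fun k _ => le_mul_of_one_le_left (hpos k) (one_le_pow₀ hr)
    _ ≤ (1 - δ) / (1 + δ) := hfilter _
    _ ≤ 1 := (div_le_one (by linarith)).mpr (by linarith)
  refine (sum_pow_mul_sub_conv_nonneg (by positivity) (by linarith) hpos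
    (fun k => hnonneg (y k)) (T + 1) (hfilter _)).trans (Finset.sum_le_sum fun m _ => ?_)
  refine mul_le_mul_of_nonneg_left ?_ (by positivity)
  rw [hu m, real_inner_smul_left]
  exact one_sub_mul_sub_one_add_mul_le_of_abs_le (hnonneg _)
    (Finset.sum_nonneg fun k _ => mul_nonneg (hpos k) (hnonneg _)) (hδseq m) hδ1.le
    (hconv.sub_sum_le_inner_gradient_sub_sum hg0 (hdiff _) _ (fun k _ => hpos k) (hmass m) _)
end
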